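/- arXiv:1304.0142 — 4 statements merged into one kernel-verified Lean document; each statement's English description precedes it below -/
import Mathlib

section
/- The function f(Y₁,Y₂,Y₃) = Y₁ + Y₂ + (Y₃+q)²/(Y₁Y₂Y₃), defined on the torus {Y₁Y₂Y₃ ≠ 0} ⊂ ℂ³ with parameter q ≠ 0, has exactly 3 critical points: in coordinates (Δ₁,Δ₂,Δ₃) with Y₁=Δ₁, Y₂=2Δ₂/Δ₁, Y₃=Δ₃, the critical points are (ξᵢ, ξᵢ²/2, q) for the three roots ξᵢ of ξ³=4q. -/
/-- The Laurent polynomial `f = Δ₁ + 2Δ₂/Δ₁ + (Δ₃+q)²/(2Δ₂Δ₃)` on the torus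
`{Δ₁Δ₂Δ₃ ≠ 0} ⊂ ℂ³`, with `q ≠ 0`, has as its critical points exactly the three points
`(ξ, ξ²/2, q)` where `ξ` ranges over the roots of `ξ³ = 4q`. -/
theorem quadric_standard_potential_critical_points (q : ℂ) (hq : q ≠ 0)
    (d1 d2 d3 : ℂ) (h : d1 * d2 * d3 ≠ 0) :
    (deriv (fun s : ℂ => s + 2 * d2 / s + (d3 + q) ^ 2 / (2 * d2 * d3)) d1 = 0 ∧
     deriv (fun s : ℂ => d1 + 2 * s / d1 + (d3 + q) ^ 2 / (2 * s * d3)) d2 = 0 ∧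
     deriv (fun s : ℂ => d1 + 2 * d2 / d1 + (s + q) ^ 2 / (2 * d2 * s)) d3 = 0) ↔
    ∃ ξ : ℂ, ξ ^ 3 = 4 * q ∧ d1 = ξ ∧ d2 = ξ ^ 2 / 2 ∧ d3 = q := by
  have h1 : d1 ≠ 0 := fun e => h (by simp [e])
  have h2 : d2 ≠ 0 := fun e => h (by simp [e])
  have h3 : d3 ≠ 0 := fun e => h (by simp [e])
  have hden2 : (2 : ℂ) * d2 * d3 ≠ 0 := by
    simp [h2, h3]
  have hD1 : deriv (fun s : ℂ => s + 2 * d2 / s + (d3 + q) ^ 2 / (2 * d2 * d3)) d1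
      = 1 + (0 * d1 - 2 * d2 * 1) / d1 ^ 2 := by
    have hd : HasDerivAt (fun s : ℂ => s + 2 * d2 / s + (d3 + q) ^ 2 / (2 * d2 * d3))
        (1 + (0 * d1 - 2 * d2 * 1) / d1 ^ 2) d1 := by
      exact ((hasDerivAt_id d1).add
        ((hasDerivAt_const d1 (2 * d2)).div (hasDerivAt_id d1) h1)).add_const _
    exact hd.deriv
  have hD2 : deriv (fun s : ℂ => d1 + 2 * s / d1 + (d3 + q) ^ 2 / (2 * s * d3)) d2
      = 2 * 1 / d1 + (0 * (2 * d2 * d3) - (d3 + q) ^ 2 * (2 * 1 * d3)) / (2 * d2 * d3) ^ 2 := by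
    have hlin : HasDerivAt (fun s : ℂ => 2 * s / d1) (2 * 1 / d1) d2 :=
      ((hasDerivAt_id d2).const_mul 2).div_const d1
    have hden : HasDerivAt (fun s : ℂ => 2 * s * d3) (2 * 1 * d3) d2 :=
      ((hasDerivAt_id d2).const_mul 2).mul_const d3
    have hd : HasDerivAt (fun s : ℂ => d1 + 2 * s / d1 + (d3 + q) ^ 2 / (2 * s * d3))
        (2 * 1 / d1 + (0 * (2 * d2 * d3) - (d3 + q) ^ 2 * (2 * 1 * d3)) / (2 * d2 * d3) ^ 2) d2 := by
      simpa [Pi.add_def, Pi.div_def] using (hlin.const_add d1).add ((hasDerivAt_const d2 ((d3 + q) ^ 2)).div hden hden2)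
    exact hd.deriv
  have hden3 : (2 : ℂ) * d2 * d3 ≠ 0 := hden2
  have hD3 : deriv (fun s : ℂ => d1 + 2 * d2 / d1 + (s + q) ^ 2 / (2 * d2 * s)) d3
      = (2 * (d3 + q) ^ 1 * 1 * (2 * d2 * d3) - (d3 + q) ^ 2 * (2 * d2 * 1)) / (2 * d2 * d3) ^ 2 := by
    have hnum : HasDerivAt (fun s : ℂ => (s + q) ^ 2) (2 * (d3 + q) ^ 1 * 1) d3 := by
      simpa [Pi.pow_def] using (((hasDerivAt_id d3).add_const q).pow 2)
    have hden : HasDerivAt (fun s : ℂ => 2 * d2 * s) (2 * d2 * 1) d3 :=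
      (hasDerivAt_id d3).const_mul (2 * d2)
    have hd : HasDerivAt (fun s : ℂ => d1 + 2 * d2 / d1 + (s + q) ^ 2 / (2 * d2 * s))
        ((2 * (d3 + q) ^ 1 * 1 * (2 * d2 * d3) - (d3 + q) ^ 2 * (2 * d2 * 1)) / (2 * d2 * d3) ^ 2) d3 :=
      (hnum.div hden hden3).const_add _
    exact hd.deriv
  rw [hD1, hD2, hD3]
  constructor
  · rintro ⟨e1, e2, e3⟩
    field_simp at e1 e2 e3
    have h2d2 : (2 : ℂ) * d2 ≠ 0 := by simp [h2]
    have hfac : (d3 + q) * (d3 - q) = 0 :=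
      mul_left_cancel₀ h2d2 (by linear_combination (2 * d2) * e3)
    rcases mul_eq_zero.mp hfac with hc | hc
    · -- d3 = -q leads to contradiction in e2
      exfalso
      have hz : (2 * d2 * d3) ^ 2 = 0 := by
        linear_combination d3 * e2 + (d1 * d3 * (d3 + q)) * hc
      exact hden2 (pow_eq_zero_iff (n := 2) (by norm_num) |>.mp hz)
    · have hd3 : d3 = q := sub_eq_zero.mp hc
      have hcancel : (q ^ 2 * d1 * 2) ≠ 0 := by simp [hq, h1]
      have key : (q ^ 2 * d1 * 2) * d1 ^ 3 = (q ^ 2 * d1 * 2) * (4 * q) := by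
        linear_combination 2 * q * e2 + (2 * q ^ 2 * (d1 ^ 2 + 2 * d2)) * e1 +
          (-2 * q * (4 * d2 ^ 2 - d1 * (d3 + 3 * q))) * hc
      exact ⟨d1, mul_left_cancel₀ hcancel key, rfl, by linear_combination -e1 / 2, hd3⟩
  · rintro ⟨ξ, hξ, rfl, rfl, rfl⟩
    refine ⟨?_, ?_, ?_⟩
    · field_simp
      ring
    · field_simp
      linear_combination (2 * d3) * hξ
    · field_simp
      ring
end

section
/- The function f̃(x,y,z) = y(2+z) + qx²/((xy−1)(1+z)) defined on the open set U = {(xy−1)(1+z) ≠ 0} ⊂ ℂ³, with parameter q ≠ 0, has exactly 4 critical points: P₀ = (0, 0, −2) and Pᵢ = (2/ξᵢ, ξᵢ, 0) where ξᵢ ranges over the three roots of ξ³ = 4q. -/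
/-!
The `x`-partial of `f̃` is `q x (x y - 2) / ((x y - 1)² (1 + z))`, so a critical point has
`x = 0` or `x y = 2`. For `x = 0` the other two partials reduce to `2 + z = 0` and `y = 0`.
For `x y = 2` we have `x y - 1 = 1`; multiplying the `z`-equation `y (1 + z)² = q x²` by `x`
gives `2 (1 + z)² = q x³`, while the `y`-equation says `q x³ = (2 + z)(1 + z)`. Hence `z = 0`,
`q x³ = 2`, and `ξ = y = 2 / x` satisfies `ξ³ = 8 / x³ = 4 q`.
-/

section PartialDerivatives

variable {𝕜 : Type*} [NontriviallyNormedField 𝕜] (q x y z : 𝕜)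

theorem hasDerivAt_potential_x (h : (x * y - 1) * (1 + z) ≠ 0) :
    HasDerivAt (fun s : 𝕜 => y * (2 + z) + q * s ^ 2 / ((s * y - 1) * (1 + z)))
      (q * x * (x * y - 2) / ((x * y - 1) ^ 2 * (1 + z))) x := by
  have hv : HasDerivAt (fun s : 𝕜 => (s * y - 1) * (1 + z)) (y * (1 + z)) x := by
    simpa using (((hasDerivAt_id x).mul_const y).sub_const 1).mul_const (1 + z)
  refine ((((hasDerivAt_pow 2 x).const_mul q).fun_div hv h).const_add (y * (2 + z))).congr_deriv
    ?_
  obtain ⟨hA, hB⟩ := mul_ne_zero_iff.mp h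
  field_simp
  ring

theorem hasDerivAt_potential_y (h : (x * y - 1) * (1 + z) ≠ 0) :
    HasDerivAt (fun s : 𝕜 => s * (2 + z) + q * x ^ 2 / ((x * s - 1) * (1 + z)))
      ((2 + z) - q * x ^ 3 / ((x * y - 1) ^ 2 * (1 + z))) y := by
  have hv : HasDerivAt (fun s : 𝕜 => (x * s - 1) * (1 + z)) (x * (1 + z)) y := by
    simpa using (((hasDerivAt_id y).const_mul x).sub_const 1).mul_const (1 + z)
  refine (((hasDerivAt_id y).mul_const (2 + z)).add
    ((hasDerivAt_const y (q * x ^ 2)).fun_div hv h)).congr_deriv ?_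
  obtain ⟨hA, hB⟩ := mul_ne_zero_iff.mp h
  field_simp
  ring

theorem hasDerivAt_potential_z (h : (x * y - 1) * (1 + z) ≠ 0) :
    HasDerivAt (fun s : 𝕜 => y * (2 + s) + q * x ^ 2 / ((x * y - 1) * (1 + s)))
      (y - q * x ^ 2 / ((x * y - 1) * (1 + z) ^ 2)) z := by
  have hv : HasDerivAt (fun s : 𝕜 => (x * y - 1) * (1 + s)) (x * y - 1) z := by
    simpa using ((hasDerivAt_id z).const_add 1).const_mul (x * y - 1)
  refine ((((hasDerivAt_id z).const_add 2).const_mul y).add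
    ((hasDerivAt_const z (q * x ^ 2)).fun_div hv h)).congr_deriv ?_
  obtain ⟨hA, hB⟩ := mul_ne_zero_iff.mp h
  field_simp
  ring

theorem deriv_potential_x_eq_zero_iff (hq : q ≠ 0) (h : (x * y - 1) * (1 + z) ≠ 0) :
    deriv (fun s : 𝕜 => y * (2 + z) + q * s ^ 2 / ((s * y - 1) * (1 + z))) x = 0 ↔
      x * (x * y - 2) = 0 := by
  obtain ⟨hA, hB⟩ := mul_ne_zero_iff.mp h
  rw [(hasDerivAt_potential_x q x y z h).deriv, div_eq_zero_iff, mul_assoc]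
  simp [hq, hA, hB]

theorem deriv_potential_y_eq_zero_iff (h : (x * y - 1) * (1 + z) ≠ 0) :
    deriv (fun s : 𝕜 => s * (2 + z) + q * x ^ 2 / ((x * s - 1) * (1 + z))) y = 0 ↔
      (2 + z) * ((x * y - 1) ^ 2 * (1 + z)) = q * x ^ 3 := by
  obtain ⟨hA, hB⟩ := mul_ne_zero_iff.mp h
  rw [(hasDerivAt_potential_y q x y z h).deriv, sub_eq_zero,
    eq_div_iff (mul_ne_zero (pow_ne_zero 2 hA) hB)]

theorem deriv_potential_z_eq_zero_iff (h : (x * y - 1) * (1 + z) ≠ 0) :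
    deriv (fun s : 𝕜 => y * (2 + s) + q * x ^ 2 / ((x * y - 1) * (1 + s))) z = 0 ↔
      y * ((x * y - 1) * (1 + z) ^ 2) = q * x ^ 2 := by
  obtain ⟨hA, hB⟩ := mul_ne_zero_iff.mp h
  rw [(hasDerivAt_potential_z q x y z h).deriv, sub_eq_zero,
    eq_div_iff (mul_ne_zero hA (pow_ne_zero 2 hB))]

end PartialDerivatives

section CriticalEquations

variable {K : Type*} [Field K] {q x y z : K}

theorem critical_equations_of_x_eq_zero (hB : 1 + z ≠ 0)
    (e2 : (2 + z) * ((0 * y - 1) ^ 2 * (1 + z)) = q * 0 ^ 3)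
    (e3 : y * ((0 * y - 1) * (1 + z) ^ 2) = q * 0 ^ 2) : y = 0 ∧ z = -2 := by
  have hz : (2 + z) * (1 + z) = 0 := by linear_combination e2
  have hy : y * (1 + z) ^ 2 = 0 := by linear_combination -e3
  exact ⟨(mul_eq_zero.mp hy).resolve_right (pow_ne_zero 2 hB),
    eq_neg_of_add_eq_zero_right ((mul_eq_zero.mp hz).resolve_right hB)⟩

theorem critical_equations_of_mul_eq_two (h2 : (2 : K) ≠ 0) (hB : 1 + z ≠ 0) (hxy : x * y = 2)
    (e2 : (2 + z) * ((x * y - 1) ^ 2 * (1 + z)) = q * x ^ 3)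
    (e3 : y * ((x * y - 1) * (1 + z) ^ 2) = q * x ^ 2) :
    y ^ 3 = 4 * q ∧ x = 2 / y ∧ z = 0 := by
  have hy : y ≠ 0 := by rintro rfl; exact h2 (by simpa using hxy.symm)
  have hx : x ≠ 0 := by rintro rfl; exact h2 (by simpa using hxy.symm)
  rw [hxy] at e2 e3
  have hBz : (1 + z) * z = 0 := by linear_combination x * e3 - e2 - (1 + z) ^ 2 * hxy
  have hz : z = 0 := (mul_eq_zero.mp hBz).resolve_left hB
  subst hz
  refine ⟨mul_right_cancel₀ (pow_ne_zero 3 hx) ?_, (eq_div_iff hy).mpr hxy, rfl⟩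
  linear_combination (x ^ 2 * y ^ 2 + 2 * x * y + 4) * hxy + 4 * e2

theorem critical_equations_at_cube_root (h2 : (2 : K) ≠ 0) (hq : q ≠ 0) {ξ : K}
    (hξ : ξ ^ 3 = 4 * q) :
    (2 / ξ) * ((2 / ξ) * ξ - 2) = 0 ∧
      (2 + 0) * (((2 / ξ) * ξ - 1) ^ 2 * (1 + 0)) = q * (2 / ξ) ^ 3 ∧
      ξ * (((2 / ξ) * ξ - 1) * (1 + 0) ^ 2) = q * (2 / ξ) ^ 2 := by
  have hξ0 : ξ ≠ 0 := by
    rintro rfl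
    exact mul_ne_zero (mul_ne_zero h2 h2) hq (by linear_combination -hξ)
  rw [div_mul_cancel₀ 2 hξ0]
  refine ⟨by ring, ?_, ?_⟩
  · field_simp
    linear_combination 2 * hξ
  · field_simp
    linear_combination hξ

theorem critical_equations_iff (h2 : (2 : K) ≠ 0) (hq : q ≠ 0) (hB : 1 + z ≠ 0) :
    (x * (x * y - 2) = 0 ∧ (2 + z) * ((x * y - 1) ^ 2 * (1 + z)) = q * x ^ 3 ∧
        y * ((x * y - 1) * (1 + z) ^ 2) = q * x ^ 2) ↔
      ((x = 0 ∧ y = 0 ∧ z = -2) ∨ ∃ ξ : K, ξ ^ 3 = 4 * q ∧ x = 2 / ξ ∧ y = ξ ∧ z = 0) := by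
  constructor
  · rintro ⟨e1, e2, e3⟩
    rcases mul_eq_zero.mp e1 with rfl | hxy
    · exact Or.inl ⟨rfl, critical_equations_of_x_eq_zero hB e2 e3⟩
    · obtain ⟨hy3, hx, hz⟩ :=
        critical_equations_of_mul_eq_two h2 hB (sub_eq_zero.mp hxy) e2 e3
      exact Or.inr ⟨y, hy3, hx, rfl, hz⟩
  · rintro (⟨rfl, rfl, rfl⟩ | ⟨ξ, hξ, rfl, rfl, rfl⟩)
    · norm_num
    · exact critical_equations_at_cube_root h2 hq hξ

end CriticalEquations

/-- The function `f̃(x,y,z) = y(2+z) + qx²/((xy−1)(1+z))` on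
`{(xy−1)(1+z) ≠ 0} ⊂ ℂ³`, with `q ≠ 0`, has exactly 4 critical points:
`P₀ = (0,0,−2)` and `Pᵢ = (2/ξᵢ, ξᵢ, 0)` for the three roots `ξᵢ` of `ξ³ = 4q`. -/
theorem quadric_compactified_potential_critical_points (q : ℂ) (hq : q ≠ 0)
    (x y z : ℂ) (h : (x * y - 1) * (1 + z) ≠ 0) :
    (deriv (fun s : ℂ => y * (2 + z) + q * s ^ 2 / ((s * y - 1) * (1 + z))) x = 0 ∧
     deriv (fun s : ℂ => s * (2 + z) + q * x ^ 2 / ((x * s - 1) * (1 + z))) y = 0 ∧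
     deriv (fun s : ℂ => y * (2 + s) + q * x ^ 2 / ((x * y - 1) * (1 + s))) z = 0) ↔
    ((x = 0 ∧ y = 0 ∧ z = -2) ∨
     ∃ ξ : ℂ, ξ ^ 3 = 4 * q ∧ x = 2 / ξ ∧ y = ξ ∧ z = 0) := by
  rw [deriv_potential_x_eq_zero_iff q x y z hq h, deriv_potential_y_eq_zero_iff q x y z h,
    deriv_potential_z_eq_zero_iff q x y z h]
  exact critical_equations_iff two_ne_zero hq (right_ne_zero_of_mul h)
end

section
/- Every critical point of the function g(x,y,z) = y(z+1) + qx²/((xy−1)z) on the open set {(xy−1)z ≠ 0} ⊂ ℂ³ lies on the hypersurface {xy − z − 1 = 0}. -/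
/-!
The three partial derivatives of `g` are fractions with nonvanishing denominators, so a critical
point satisfies the polynomial equations `q x (xy - 2) = 0`, `(z + 1)(xy - 1)² z = q x³` and
`y (xy - 1) z² = q x²`. If `q x = 0`, the last one forces `y = 0` and then the second `z = -1`;
otherwise `xy = 2`, and `x` times the third equation minus the second gives `z² = z`, so `z = 1`.
In both cases `xy - 1 = z`.
-/

section Derivatives

variable {𝕜 : Type*} [NontriviallyNormedField 𝕜] {q x y z : 𝕜}

def quadricG (q x y z : 𝕜) : 𝕜 :=
  y * (z + 1) + q * x ^ 2 / ((x * y - 1) * z)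

theorem hasDerivAt_quadricG_fst (h : (x * y - 1) * z ≠ 0) :
    HasDerivAt (fun s => quadricG q s y z)
      (q * x * (x * y - 2) / ((x * y - 1) ^ 2 * z)) x := by
  have hz : z ≠ 0 := right_ne_zero_of_mul h
  have hu : x * y - 1 ≠ 0 := left_ne_zero_of_mul h
  refine ((hasDerivAt_const x (y * (z + 1))).add
    (((hasDerivAt_pow 2 x).const_mul q).div
      ((((hasDerivAt_id' x).mul_const y).sub_const 1).mul_const z) h)).congr_deriv ?_
  field_simp
  ring

theorem hasDerivAt_quadricG_snd (h : (x * y - 1) * z ≠ 0) :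
    HasDerivAt (fun s => quadricG q x s z)
      (((z + 1) * (x * y - 1) ^ 2 * z - q * x ^ 3) / ((x * y - 1) ^ 2 * z)) y := by
  have hz : z ≠ 0 := right_ne_zero_of_mul h
  have hu : x * y - 1 ≠ 0 := left_ne_zero_of_mul h
  refine (((hasDerivAt_id' y).mul_const (z + 1)).add
    ((hasDerivAt_const y (q * x ^ 2)).div
      ((((hasDerivAt_id' y).const_mul x).sub_const 1).mul_const z) h)).congr_deriv ?_
  field_simp
  ring

theorem hasDerivAt_quadricG_thd (h : (x * y - 1) * z ≠ 0) :
    HasDerivAt (fun s => quadricG q x y s)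
      ((y * (x * y - 1) * z ^ 2 - q * x ^ 2) / ((x * y - 1) * z ^ 2)) z := by
  have hz : z ≠ 0 := right_ne_zero_of_mul h
  have hu : x * y - 1 ≠ 0 := left_ne_zero_of_mul h
  refine ((((hasDerivAt_id' z).add_const 1).const_mul y).add
    ((hasDerivAt_const z (q * x ^ 2)).div ((hasDerivAt_id' z).const_mul (x * y - 1)) h)
      ).congr_deriv ?_
  -- otherwise `field_simp` rewrites the factor to `y * x - 1` and no longer sees `hu`
  generalize x * y - 1 = u at hu ⊢
  field_simp
  ring

end Derivatives

theorem mul_sub_sub_one_eq_zero_of_quadricG_critical {R : Type*} [CommRing R] [IsDomain R]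
    {q x y z : R} (hu : x * y - 1 ≠ 0) (hz : z ≠ 0) (hgx : q * x * (x * y - 2) = 0)
    (hgy : (z + 1) * (x * y - 1) ^ 2 * z = q * x ^ 3) (hgz : y * (x * y - 1) * z ^ 2 = q * x ^ 2) :
    x * y - z - 1 = 0 := by
  rcases mul_eq_zero.mp hgx with hqx | hxy2
  · have hy0 : y = 0 := by
      have : y * (x * y - 1) * z ^ 2 = 0 := by linear_combination hgz + x * hqx
      simpa [hu, hz] using this
    subst hy0
    have : (z + 1) * z = 0 := by linear_combination hgy + x ^ 2 * hqx
    linear_combination -(mul_eq_zero.mp this).resolve_right hz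
  · have hxy : x * y = 2 := by linear_combination hxy2
    have : (z - 1) * z = 0 := by
      linear_combination x * hgz - hgy - (z ^ 2 * (x * y + 1) - (z + 1) * z * (x * y)) * hxy
    linear_combination hxy - (mul_eq_zero.mp this).resolve_right hz

theorem quadric_g_critical_points_on_hypersurface_general (q : ℂ)
    (x y z : ℂ) (h : (x * y - 1) * z ≠ 0)
    (hx : deriv (fun s : ℂ => y * (z + 1) + q * s ^ 2 / ((s * y - 1) * z)) x = 0)
    (hy : deriv (fun s : ℂ => s * (z + 1) + q * x ^ 2 / ((x * s - 1) * z)) y = 0)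
    (hz : deriv (fun s : ℂ => y * (s + 1) + q * x ^ 2 / ((x * y - 1) * s)) z = 0) :
    x * y - z - 1 = 0 := by
  have hz0 : z ≠ 0 := right_ne_zero_of_mul h
  have hu : x * y - 1 ≠ 0 := left_ne_zero_of_mul h
  change deriv (fun s => quadricG q s y z) x = 0 at hx
  change deriv (fun s => quadricG q x s z) y = 0 at hy
  change deriv (fun s => quadricG q x y s) z = 0 at hz
  rw [(hasDerivAt_quadricG_fst h).deriv, div_eq_zero_iff] at hx
  rw [(hasDerivAt_quadricG_snd h).deriv, div_eq_zero_iff, sub_eq_zero] at hy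
  rw [(hasDerivAt_quadricG_thd h).deriv, div_eq_zero_iff, sub_eq_zero] at hz
  exact mul_sub_sub_one_eq_zero_of_quadricG_critical hu hz0 (hx.resolve_right (by positivity))
    (hy.resolve_right (by positivity)) (hz.resolve_right (by positivity))

/-- Every critical point of `g(x,y,z) = y(z+1) + qx²/((xy−1)z)` on
`{(xy−1)z ≠ 0} ⊂ ℂ³` lies on the hypersurface `{xy − z − 1 = 0}`. -/
theorem quadric_g_critical_points_on_hypersurface (q : ℂ) (hq : q ≠ 0)
    (x y z : ℂ) (h : (x * y - 1) * z ≠ 0)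
    (hx : deriv (fun s : ℂ => y * (z + 1) + q * s ^ 2 / ((s * y - 1) * z)) x = 0)
    (hy : deriv (fun s : ℂ => s * (z + 1) + q * x ^ 2 / ((x * s - 1) * z)) y = 0)
    (hz : deriv (fun s : ℂ => y * (s + 1) + q * x ^ 2 / ((x * y - 1) * s)) z = 0) :
    x * y - z - 1 = 0 :=
  quadric_g_critical_points_on_hypersurface_general q x y z h hx hy hz
end

section
/- Let A be a commutative ℂ-algebra with basis Δ₀,Δ₁,Δ₂,Δ₃ where Δ₀ = 1 and multiplication by Δ₁ is given by Δ₁Δ₁ = 2Δ₂, Δ₁Δ₂ = Δ₃ + qΔ₀, Δ₁Δ₃ = qΔ₁, for a fixed q ≠ 0, and assume A is generated by Δ₁. Then the characteristic polynomial of multiplication by Δ₁ on A is ξ(ξ³ − 4q), and A is isomorphic as a ℂ-algebra to ℂ⁴ (i.e. A is semisimple with 4 one-dimensional factors); the corresponding points of Spec A are P₀ = (Δ₁,Δ₂,Δ₃) = (0,0,−q) and Pᵢ = (ξᵢ, ξᵢ²/2, q) for the three roots ξᵢ of ξ³ = 4q. -/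
/-!
The relations give `Δ₁⁴ = 4qΔ₁`, so `Δ₁` is annihilated by `p = X (X³ - 4q)`. Since `Δ₁`
generates `A` and `dim A = deg p`, the map `ℂ[X]/(p) → A`, `X ↦ Δ₁`, is an isomorphism. Hence the
characteristic polynomial of `Δ₁` is `p`, and the characters of `A` are the evaluations at the
roots of `p`. For `q ≠ 0` the polynomial `p` is separable, so there are four distinct characters;
by Dedekind's independence of characters they form a basis of the dual of `A`, i.e. together
they give an isomorphism `A ≃ ℂ⁴`.
-/

open Polynomial Module

theorem AlgHom.pi_bijective_of_card_eq_finrank {k A ι : Type*} [Field k] [Ring A]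
    [Algebra k A] [FiniteDimensional k A] [Fintype ι] (φ : ι → A →ₐ[k] k)
    (hφ : Function.Injective φ) (hcard : Fintype.card ι = finrank k A) :
    Function.Bijective (AlgHom.pi φ) := by
  have hspan : Submodule.span k (Set.range fun i ↦ (φ i).toLinearMap) = ⊤ :=
    ((linearIndependent_algHom_toLinearMap' k A k).comp φ hφ).span_eq_top_of_card_eq_finrank'
      (hcard.trans Subspace.dual_finrank_eq.symm)
  have hinj : Function.Injective (AlgHom.pi φ) := by
    refine (injective_iff_map_eq_zero _).mpr fun x hx ↦ (forall_dual_apply_eq_zero_iff k x).mp ?_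
    have : Dual.eval k A x = 0 := LinearMap.ext_on_range hspan fun i ↦ congrFun hx i
    exact LinearMap.congr_fun this
  refine ⟨hinj, (LinearMap.injective_iff_surjective_of_finrank_eq_finrank
    (f := (AlgHom.pi φ).toLinearMap) ?_).mp hinj⟩
  simp [hcard]

namespace AdjoinRoot

variable {k A : Type*} [Field k] [CommRing A] [Algebra k A] [FiniteDimensional k A]
  {p : k[X]} {a : A}

theorem liftAlgHom_bijective_of_adjoin_eq_top (hp : p ≠ 0) (ha : aeval a p = 0)
    (hgen : Algebra.adjoin k {a} = ⊤) (hdim : finrank k A = p.natDegree) :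
    Function.Bijective (liftAlgHom p (Algebra.ofId k A) a ha) := by
  have hsurj : Function.Surjective (liftAlgHom p (Algebra.ofId k A) a ha) := by
    rw [← AlgHom.range_eq_top, eq_top_iff, ← hgen, Algebra.adjoin_le_iff,
      Set.singleton_subset_iff]
    exact ⟨root p, liftAlgHom_root p _ a ha⟩
  have := (powerBasis hp).finite
  refine ⟨(LinearMap.injective_iff_surjective_of_finrank_eq_finrank
    (f := (liftAlgHom p (Algebra.ofId k A) a ha).toLinearMap) ?_).mpr hsurj, hsurj⟩
  rw [(powerBasis hp).finrank, powerBasis_dim, hdim]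

noncomputable def algEquivOfAdjoinEqTop (hp : p ≠ 0) (ha : aeval a p = 0)
    (hgen : Algebra.adjoin k {a} = ⊤) (hdim : finrank k A = p.natDegree) :
    AdjoinRoot p ≃ₐ[k] A :=
  .ofBijective _ (liftAlgHom_bijective_of_adjoin_eq_top hp ha hgen hdim)

@[simp]
theorem algEquivOfAdjoinEqTop_root (hp : p ≠ 0) (ha : aeval a p = 0)
    (hgen : Algebra.adjoin k {a} = ⊤) (hdim : finrank k A = p.natDegree) :
    algEquivOfAdjoinEqTop hp ha hgen hdim (root p) = a :=
  liftAlgHom_root p _ a ha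

end AdjoinRoot

section Generator

open AdjoinRoot

variable {k A : Type*} [Field k] [CommRing A] [Algebra k A] [FiniteDimensional k A]
  {p : k[X]} {a : A}

theorem charpoly_mulLeft_eq_of_adjoin_eq_top (hp : p.Monic) (ha : aeval a p = 0)
    (hgen : Algebra.adjoin k {a} = ⊤) (hdim : finrank k A = p.natDegree) :
    (LinearMap.mulLeft k a).charpoly = p := by
  set e := algEquivOfAdjoinEqTop hp.ne_zero ha hgen hdim
  set pb := powerBasis hp.ne_zero
  have := pb.finite
  have hconj : e.toLinearEquiv.conj (LinearMap.mulLeft k pb.gen) = LinearMap.mulLeft k a := by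
    ext x
    simp [LinearEquiv.conj_apply, e, pb]
  calc (LinearMap.mulLeft k a).charpoly
      = (LinearMap.mulLeft k pb.gen).charpoly := by rw [← hconj, LinearEquiv.charpoly_conj]
    _ = (Algebra.leftMulMatrix pb.basis pb.gen).charpoly := (LinearMap.charpoly_toMatrix _ _).symm
    _ = p := by rw [charpoly_leftMulMatrix, minpoly_powerBasis_gen_of_monic hp]

theorem exists_algHom_apply_eq_of_isRoot (hp : p ≠ 0) (ha : aeval a p = 0)
    (hgen : Algebra.adjoin k {a} = ⊤) (hdim : finrank k A = p.natDegree) {ξ : k}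
    (hξ : p.IsRoot ξ) : ∃ φ : A →ₐ[k] k, φ a = ξ := by
  set e := algEquivOfAdjoinEqTop hp ha hgen hdim
  have he : e.symm a = root p := e.symm_apply_eq.mpr (algEquivOfAdjoinEqTop_root ..).symm
  exact ⟨(liftAlgHom p (Algebra.ofId k k) ξ hξ).comp e.symm.toAlgHom, by simp [he]⟩

theorem nonempty_algEquiv_fun_of_separable (hp : p.Separable) (hsplit : p.Splits)
    (ha : aeval a p = 0) (hgen : Algebra.adjoin k {a} = ⊤) (hdim : finrank k A = p.natDegree) :
    Nonempty (A ≃ₐ[k] (Fin p.natDegree → k)) := by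
  classical
  have hφ (ξ : p.rootSet k) : ∃ φ : A →ₐ[k] k, φ a = ξ :=
    exists_algHom_apply_eq_of_isRoot hp.ne_zero ha hgen hdim
      (by simpa using (mem_rootSet.mp ξ.2).2)
  choose φ hφa using hφ
  have hinj : Function.Injective φ := fun ξ η h ↦ Subtype.ext (by rw [← hφa, h, hφa])
  have hcard : Fintype.card (p.rootSet k) = p.natDegree :=
    card_rootSet_eq_natDegree hp (by simpa using hsplit)
  exact ⟨(AlgEquiv.ofBijective _
    (AlgHom.pi_bijective_of_card_eq_finrank φ hinj (hcard.trans hdim.symm))).trans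
      (AlgEquiv.piCongrLeft' k (fun _ ↦ k) (Fintype.equivFinOfCardEq hcard))⟩

end Generator

section XMulXPowSubC

variable {k : Type*} [Field k] {n : ℕ} {c : k}

theorem separable_X_mul_X_pow_sub_C (hn : (n : k) ≠ 0) (hc : c ≠ 0) :
    (X * (X ^ n - C c)).Separable := by
  have hn0 : n ≠ 0 := by rintro rfl; simp at hn
  refine separable_X.mul (separable_X_pow_sub_C c hn hc) ?_
  refine (irreducible_X.coprime_iff_not_dvd).mpr ?_
  simp [X_dvd_iff, hn0.symm, hc]

theorem isRoot_X_mul_X_pow_sub_C_iff {ξ : k} :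
    (X * (X ^ n - C c)).IsRoot ξ ↔ ξ = 0 ∨ ξ ^ n = c := by
  simp [sub_eq_zero]

theorem natDegree_X_mul_X_pow_sub_C (hn : n ≠ 0) (c : k) :
    (X * (X ^ n - C c)).natDegree = n + 1 := by
  rw [natDegree_mul X_ne_zero (X_pow_sub_C_ne_zero (Nat.pos_of_ne_zero hn) c), natDegree_X,
    natDegree_X_pow_sub_C, add_comm]

end XMulXPowSubC

section QuadricRelations

variable {A : Type*} [CommRing A] [Algebra ℂ A] {q : ℂ} {Δ₁ Δ₂ Δ₃ : A}

theorem aeval_eq_zero_of_quadric_relations (h11 : Δ₁ * Δ₁ = (2 : ℂ) • Δ₂)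
    (h12 : Δ₁ * Δ₂ = Δ₃ + q • 1) (h13 : Δ₁ * Δ₃ = q • Δ₁) :
    aeval Δ₁ (X * (X ^ 3 - C (4 * q))) = 0 := by
  have : Δ₁ ^ 4 = (4 * q) • Δ₁ := by
    calc Δ₁ ^ 4 = Δ₁ * (Δ₁ * (Δ₁ * Δ₁)) := by ring
      _ = (2 * q + 2 * q) • Δ₁ := by
        rw [h11, mul_smul_comm, h12, mul_smul_comm, mul_add, h13, mul_smul_comm, mul_one,
          smul_add, smul_smul, ← add_smul]
      _ = (4 * q) • Δ₁ := by ring_nf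
  rw [map_mul, map_sub, aeval_X, aeval_X_pow, aeval_C, mul_sub, ← pow_succ', this,
    Algebra.smul_def, Algebra.commutes, sub_self]

theorem algHom_apply_of_quadric_relations (h11 : Δ₁ * Δ₁ = (2 : ℂ) • Δ₂)
    (h12 : Δ₁ * Δ₂ = Δ₃ + q • 1) (φ : A →ₐ[ℂ] ℂ) :
    φ Δ₂ = φ Δ₁ ^ 2 / 2 ∧ φ Δ₃ = φ Δ₁ ^ 3 / 2 - q := by
  have e11 := congrArg φ h11
  have e12 := congrArg φ h12
  simp only [map_mul, map_smul, map_add, map_one, smul_eq_mul, mul_one] at e11 e12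
  exact ⟨by linear_combination -e11 / 2, by linear_combination -e12 - φ Δ₁ * e11 / 2⟩

end QuadricRelations

/-- Let `A` be a commutative ℂ-algebra with basis `Δ₀ = 1, Δ₁, Δ₂, Δ₃`,
multiplication by `Δ₁` given by `Δ₁Δ₁ = 2Δ₂`, `Δ₁Δ₂ = Δ₃ + qΔ₀`, `Δ₁Δ₃ = qΔ₁` (`q ≠ 0`),
and generated by `Δ₁`.  Then the characteristic polynomial of multiplication by `Δ₁` is
`ξ(ξ³ − 4q)`, `A ≅ ℂ⁴` as a ℂ-algebra, and the points of `Spec A` are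
`P₀ = (0,0,−q)` and `Pᵢ = (ξᵢ, ξᵢ²/2, q)` for the three roots `ξᵢ` of `ξ³ = 4q`. -/
theorem small_quantum_cohomology_Q3_semisimple (q : ℂ) (hq : q ≠ 0)
    (A : Type) [CommRing A] [Algebra ℂ A] (B : Module.Basis (Fin 4) ℂ A)
    (h0 : B 0 = 1)
    (h11 : B 1 * B 1 = (2 : ℂ) • B 2)
    (h12 : B 1 * B 2 = B 3 + q • B 0)
    (h13 : B 1 * B 3 = q • B 1)
    (hgen : Algebra.adjoin ℂ {B 1} = ⊤) :
    Matrix.charpoly ((LinearMap.toMatrix B B) (LinearMap.mulLeft ℂ (B 1))) =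
        X * (X ^ 3 - Polynomial.C (4 * q)) ∧
    Nonempty (A ≃ₐ[ℂ] (Fin 4 → ℂ)) ∧
    (∀ φ : A →ₐ[ℂ] ℂ,
      (φ (B 1) = 0 ∧ φ (B 2) = 0 ∧ φ (B 3) = -q) ∨
      (∃ ξ : ℂ, ξ ^ 3 = 4 * q ∧ φ (B 1) = ξ ∧ φ (B 2) = ξ ^ 2 / 2 ∧ φ (B 3) = q)) ∧
    (∃ φ : A →ₐ[ℂ] ℂ, φ (B 1) = 0 ∧ φ (B 2) = 0 ∧ φ (B 3) = -q) ∧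
    (∀ ξ : ℂ, ξ ^ 3 = 4 * q →
      ∃ φ : A →ₐ[ℂ] ℂ, φ (B 1) = ξ ∧ φ (B 2) = ξ ^ 2 / 2 ∧ φ (B 3) = q) := by
  rw [h0] at h12
  set p : ℂ[X] := X * (X ^ 3 - C (4 * q))
  have : FiniteDimensional ℂ A := .of_basis B
  have hp : p.Monic := monic_X.mul (monic_X_pow_sub_C _ three_ne_zero)
  have hdeg : p.natDegree = 4 := natDegree_X_mul_X_pow_sub_C three_ne_zero _
  have hdim : finrank ℂ A = p.natDegree := by rw [finrank_eq_card_basis B, hdeg, Fintype.card_fin]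
  have ha : aeval (B 1) p = 0 := aeval_eq_zero_of_quadric_relations h11 h12 h13
  have hvalues := algHom_apply_of_quadric_relations h11 h12
  have hchar (ξ : ℂ) (hξ : p.IsRoot ξ) : ∃ φ : A →ₐ[ℂ] ℂ, φ (B 1) = ξ :=
    exists_algHom_apply_eq_of_isRoot hp.ne_zero ha hgen hdim hξ
  refine ⟨?_, ?_, fun φ ↦ ?_, ?_, fun ξ hξ ↦ ?_⟩
  · rw [LinearMap.charpoly_toMatrix]
    exact charpoly_mulLeft_eq_of_adjoin_eq_top hp ha hgen hdim
  · exact hdeg ▸ nonempty_algEquiv_fun_of_separable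
      (separable_X_mul_X_pow_sub_C (by norm_num) (mul_ne_zero (by norm_num) hq))
      (IsAlgClosed.splits p) ha hgen hdim
  · have hroot : p.IsRoot (φ (B 1)) := by simpa [ha] using aeval_algHom_apply φ (B 1) p
    obtain ⟨h2, h3⟩ := hvalues φ
    rcases isRoot_X_mul_X_pow_sub_C_iff.mp hroot with h | h
    · exact .inl ⟨h, by simp [h2, h], by simp [h3, h]⟩
    · exact .inr ⟨_, h, rfl, h2, by rw [h3, h]; ring⟩
  · obtain ⟨φ, hφ⟩ := hchar 0 (isRoot_X_mul_X_pow_sub_C_iff.mpr (.inl rfl))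
    obtain ⟨h2, h3⟩ := hvalues φ
    exact ⟨φ, hφ, by simp [h2, hφ], by simp [h3, hφ]⟩
  · obtain ⟨φ, hφ⟩ := hchar ξ (isRoot_X_mul_X_pow_sub_C_iff.mpr (.inr hξ))
    obtain ⟨h2, h3⟩ := hvalues φ
    exact ⟨φ, hφ, by rw [h2, hφ], by rw [h3, hφ, hξ]; ring⟩
end
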